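/- arXiv:2106.05595 — 2 statements merged into one kernel-verified Lean document; each statement's English description precedes it below -/
import Mathlib

section
/- Let n be a positive integer, 1 ≤ p ≤ q < ∞, β ∈ ℝ, and let Ω ⊊ ℝⁿ be a nonempty open set with nonempty complement. Assume there exists a constant C₁ > 0 such that ∫_E d(x,Ωᶜ)^{(q/p)(n−p+β)−n} dx ≤ C₁ · cap_{p,β}(E,Ω)^{q/p} for every set E ⋐ Ω. Then the (q,p,β)-Hardy–Sobolev inequality holds in Ω with constant C = 4·C₁^{1/q}. -/
open MeasureTheory Metric Set
open scoped ENNReal NNReal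

noncomputable section

/-- The distance from `x` to the complement of `Ω`. -/
def distC {n : ℕ} (Ω : Set (EuclideanSpace ℝ (Fin n))) (x : EuclideanSpace ℝ (Fin n)) : ℝ :=
  Metric.infDist x Ωᶜ

/-- The distance between two sets. -/
def sDist {n : ℕ} (E F : Set (EuclideanSpace ℝ (Fin n))) : ℝ :=
  sInf (Set.image2 dist E F)

/-- A function is admissible for `Ω` if it is Lipschitz and has compact support contained
in `Ω`. -/
def Admissible {n : ℕ} (Ω : Set (EuclideanSpace ℝ (Fin n)))
    (u : EuclideanSpace ℝ (Fin n) → ℝ) : Prop :=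
  (∃ K : NNReal, LipschitzWith K u) ∧ HasCompactSupport u ∧ tsupport u ⊆ Ω

/-- `E` is compactly contained in `Ω`: `E` is bounded and has positive distance to `Ωᶜ`. -/
def CptIn {n : ℕ} (E Ω : Set (EuclideanSpace ℝ (Fin n))) : Prop :=
  Bornology.IsBounded E ∧ 0 < sDist E Ωᶜ

/-- The weighted `p`-energy of `u` on `Ω` with the distance weight `d(x,Ωᶜ)^β`. -/
def energy {n : ℕ} (p β : ℝ) (Ω : Set (EuclideanSpace ℝ (Fin n)))
    (u : EuclideanSpace ℝ (Fin n) → ℝ) : ℝ≥0∞ :=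
  ∫⁻ x in Ω, ENNReal.ofReal (‖fderiv ℝ u x‖ ^ p * distC Ω x ^ β)

/-- The weighted relative `(p,β)`-capacity of `E` in `Ω`. -/
def wcap {n : ℕ} (p β : ℝ) (E Ω : Set (EuclideanSpace ℝ (Fin n))) : ℝ≥0∞ :=
  ⨅ (u : EuclideanSpace ℝ (Fin n) → ℝ)
    (_ : Admissible Ω u ∧ ∀ x ∈ E, 1 ≤ u x), energy p β Ω u

/-- The `(q,p,β)`-Hardy–Sobolev inequality holds in `Ω` with constant `C`. -/
def HardySobolev {n : ℕ} (q p β : ℝ) (Ω : Set (EuclideanSpace ℝ (Fin n))) (C : ℝ) : Prop :=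
  ∀ u : EuclideanSpace ℝ (Fin n) → ℝ, Admissible Ω u →
    (∫⁻ x in Ω, ENNReal.ofReal
        (|u x| ^ q * distC Ω x ^ (q / p * ((n : ℝ) - p + β) - n))) ^ (1 / q) ≤
      ENNReal.ofReal C * (energy p β Ω u) ^ (1 / p)

/-!
Maz'ya's truncation argument. Cut `Ω` into the dyadic shells `{2c ≤ |u| < 4c}`, `c = 2 ^ j`.
On a shell `|u| ^ q ≤ (4c) ^ q`, and the shell lies in the superlevel set `{|u| ≥ 2c}`, which is
compactly contained in `Ω`. The cut-off `min 1 (max 0 (|u|/c - 1))` is admissible, equals `1` on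
that superlevel set and has gradient only on the band `{c < |u| < 2c}`, where it is at most
`|∇u| / c`; so the capacity of the superlevel set is at most `c ^ (-p)` times the energy of `u` on
the band. The capacity hypothesis then bounds the shell integral by `4 ^ q C₁` times the
`(q/p)`-th power of the band energy. The bands are disjoint, and since `q/p ≥ 1` the sum of the
`(q/p)`-th powers is at most the `(q/p)`-th power of the sum.
-/

theorem LipschitzWith.norm_fderiv_comp_le {X F G : Type*} [NormedAddCommGroup X]
    [NormedSpace ℝ X] [NormedAddCommGroup F] [NormedSpace ℝ F] [NormedAddCommGroup G]
    [NormedSpace ℝ G] {φ : F → G} {K : ℝ≥0} (hφ : LipschitzWith K φ) {u : X → F} {x : X}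
    (hu : DifferentiableAt ℝ u x) (hφu : DifferentiableAt ℝ (φ ∘ u) x) :
    ‖fderiv ℝ (φ ∘ u) x‖ ≤ K * ‖fderiv ℝ u x‖ := by
  refine ContinuousLinearMap.opNorm_le_bound _ (by positivity) fun h => ?_
  have hdir : ‖fderiv ℝ (φ ∘ u) x h‖ ≤ K * ‖fderiv ℝ u x h‖ := by
    refine le_of_tendsto_of_tendsto'
      (hφu.hasFDerivAt.hasLineDerivAt h).tendsto_slope_zero.norm
      ((hu.hasFDerivAt.hasLineDerivAt h).tendsto_slope_zero.norm.const_mul (K : ℝ)) fun t => ?_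
    simp only [Function.comp_apply, norm_smul, ← dist_eq_norm]
    rw [mul_left_comm]
    exact mul_le_mul_of_nonneg_left (hφ.dist_le_mul _ _) (norm_nonneg _)
  calc ‖fderiv ℝ (φ ∘ u) x h‖ ≤ K * ‖fderiv ℝ u x h‖ := hdir
    _ ≤ K * (‖fderiv ℝ u x‖ * ‖h‖) := by gcongr; exact (fderiv ℝ u x).le_opNorm h
    _ = K * ‖fderiv ℝ u x‖ * ‖h‖ := by ring

theorem ENNReal.tsum_rpow_le_rpow_tsum {ι : Type*} (a : ι → ℝ≥0∞) {r : ℝ} (hr : 1 ≤ r) :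
    ∑' i, a i ^ r ≤ (∑' i, a i) ^ r := by
  have hsplit : ∀ b : ℝ≥0∞, b ^ r = b * b ^ (r - 1) := fun b => by
    simpa using ENNReal.rpow_add_of_nonneg (x := b) 1 (r - 1) zero_le_one (by linarith)
  calc ∑' i, a i ^ r = ∑' i, a i * a i ^ (r - 1) := by simp only [hsplit]
    _ ≤ ∑' i, a i * (∑' j, a j) ^ (r - 1) := by
        gcongr with i
        exact ENNReal.le_tsum i
    _ = (∑' i, a i) ^ r := by rw [ENNReal.tsum_mul_right, hsplit]

theorem two_zpow_add_one (j : ℤ) : (2 : ℝ) ^ (j + 1) = 2 * 2 ^ j := by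
  rw [zpow_add_one₀ two_ne_zero, mul_comm]

theorem pairwise_disjoint_Ioo_two_zpow :
    Pairwise (Function.onFun Disjoint fun j : ℤ => Ioo ((2 : ℝ) ^ j) (2 * 2 ^ j)) := by
  simpa only [Order.succ_eq_add_one, two_zpow_add_one] using
    (zpow_right_mono₀ (one_le_two (α := ℝ))).pairwise_disjoint_on_Ioo_succ

theorem pairwise_disjoint_Ico_two_mul_two_zpow :
    Pairwise (Function.onFun Disjoint fun j : ℤ => Ico (2 * (2 : ℝ) ^ j) (4 * 2 ^ j)) := by
  have hmono : Monotone fun j : ℤ => 2 * (2 : ℝ) ^ j :=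
    (zpow_right_mono₀ one_le_two).const_mul zero_le_two
  convert hmono.pairwise_disjoint_on_Ico_succ using 4 with j
  rw [Order.succ_eq_add_one, two_zpow_add_one]
  ring

theorem Ioi_zero_eq_iUnion_Ico_two_mul_two_zpow :
    Ioi (0 : ℝ) = ⋃ j : ℤ, Ico (2 * 2 ^ j) (4 * 2 ^ j) := by
  ext x
  simp only [mem_Ioi, mem_iUnion, mem_Ico]
  constructor
  · intro hx
    obtain ⟨j, hj, hj'⟩ := exists_mem_Ico_zpow (half_pos hx) one_lt_two
    rw [two_zpow_add_one] at hj'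
    exact ⟨j, by linarith, by linarith⟩
  · rintro ⟨j, hj, -⟩
    exact lt_of_lt_of_le (by positivity) hj

theorem distC_nonneg {n : ℕ} (Ω : Set (EuclideanSpace ℝ (Fin n))) (x : EuclideanSpace ℝ (Fin n)) :
    0 ≤ distC Ω x :=
  infDist_nonneg

theorem cptIn_of_subset_isCompact {n : ℕ} {Ω E K : Set (EuclideanSpace ℝ (Fin n))}
    (hΩ : IsOpen Ω) (hΩc : Ωᶜ.Nonempty) (hK : IsCompact K) (hKΩ : K ⊆ Ω) (hEK : E ⊆ K)
    (hE : E.Nonempty) : CptIn E Ω := by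
  refine ⟨hK.isBounded.subset hEK, ?_⟩
  obtain ⟨x₀, hx₀K, hx₀min⟩ :=
    hK.exists_isMinOn (hE.mono hEK) (continuous_infDist_pt Ωᶜ).continuousOn
  have hx₀pos : 0 < infDist x₀ Ωᶜ :=
    (hΩ.isClosed_compl.notMem_iff_infDist_pos hΩc).1 fun h => h (hKΩ hx₀K)
  refine hx₀pos.trans_le (le_csInf (hE.image2 hΩc) ?_)
  rintro _ ⟨y, hy, z, hz, rfl⟩
  exact (isMinOn_iff.1 hx₀min y (hEK hy)).trans (infDist_le_dist_of_mem hz)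

def ramp (c t : ℝ) : ℝ := min 1 (max ((|t| - c) / c) 0)

section Ramp

variable {c : ℝ}

theorem ramp_nonneg (t : ℝ) : 0 ≤ ramp c t := le_min zero_le_one (le_max_right _ _)

theorem ramp_le_one (t : ℝ) : ramp c t ≤ 1 := min_le_left _ _

theorem ramp_eq_zero (hc : 0 < c) {t : ℝ} (ht : |t| ≤ c) : ramp c t = 0 := by
  rw [ramp, max_eq_right (div_nonpos_of_nonpos_of_nonneg (by linarith) hc.le),
    min_eq_right zero_le_one]

theorem ramp_eq_one (hc : 0 < c) {t : ℝ} (ht : 2 * c ≤ |t|) : ramp c t = 1 :=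
  min_eq_left (le_max_of_le_left ((one_le_div hc).2 (by linarith)))

theorem lipschitzWith_ramp (hc : 0 < c) : LipschitzWith (Real.toNNReal c⁻¹) (ramp c) := by
  have haff : LipschitzWith (Real.toNNReal c⁻¹) fun t : ℝ => (|t| - c) / c :=
    LipschitzWith.of_dist_le_mul fun s t => by
      rw [Real.dist_eq, Real.dist_eq, Real.coe_toNNReal _ (inv_nonneg.2 hc.le),
        div_sub_div_same, sub_sub_sub_cancel_right, abs_div, abs_of_pos hc, div_eq_inv_mul]
      exact mul_le_mul_of_nonneg_left (abs_abs_sub_abs_le_abs_sub s t) (inv_nonneg.2 hc.le)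
  exact (haff.max_const 0).const_min 1

theorem fderiv_ramp_comp_eq_zero {X : Type*} [NormedAddCommGroup X] [NormedSpace ℝ X]
    {u : X → ℝ} (hc : 0 < c) {x : X} (hx : |u x| ≤ c ∨ 2 * c ≤ |u x|) :
    fderiv ℝ (ramp c ∘ u) x = 0 := by
  rcases hx with hx | hx
  · refine IsLocalMin.fderiv_eq_zero (Filter.Eventually.of_forall fun y => ?_)
    simp only [Function.comp_apply, ramp_eq_zero hc hx, ramp_nonneg]
  · refine IsLocalMax.fderiv_eq_zero (Filter.Eventually.of_forall fun y => ?_)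
    simp only [Function.comp_apply, ramp_eq_one hc hx, ramp_le_one]

variable {n : ℕ} {Ω : Set (EuclideanSpace ℝ (Fin n))} {u : EuclideanSpace ℝ (Fin n) → ℝ}

theorem Admissible.continuous (hu : Admissible Ω u) : Continuous u :=
  hu.1.choose_spec.continuous

theorem Admissible.ramp_comp (hu : Admissible Ω u) (hc : 0 < c) : Admissible Ω (ramp c ∘ u) := by
  obtain ⟨⟨K, hK⟩, hcs, hsupp⟩ := hu
  have hramp0 : ramp c 0 = 0 := ramp_eq_zero hc (by simpa using hc.le)
  exact ⟨⟨_, (lipschitzWith_ramp hc).comp hK⟩, hcs.comp_left hramp0,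
    (tsupport_comp_subset hramp0 u).trans hsupp⟩

theorem energy_ramp_comp_le (hu : Admissible Ω u) {p β : ℝ} (hp : 0 < p) (hc : 0 < c) :
    energy p β Ω (ramp c ∘ u) ≤ ENNReal.ofReal (c⁻¹ ^ p) *
      ∫⁻ x in (|u ·|) ⁻¹' Ioo c (2 * c),
        ENNReal.ofReal (‖fderiv ℝ u x‖ ^ p * distC Ω x ^ β) := by
  obtain ⟨⟨K, hK⟩, -, -⟩ := hu
  set B := (|u ·|) ⁻¹' Ioo c (2 * c)
  set G : EuclideanSpace ℝ (Fin n) → ℝ≥0∞ := fun x =>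
    ENNReal.ofReal (c⁻¹ ^ p) * ENNReal.ofReal (‖fderiv ℝ u x‖ ^ p * distC Ω x ^ β) with hG
  have hB : MeasurableSet B := (isOpen_Ioo.preimage hK.continuous.abs).measurableSet
  have hpt : ∀ᵐ x, ENNReal.ofReal (‖fderiv ℝ (ramp c ∘ u) x‖ ^ p * distC Ω x ^ β) ≤
      B.indicator G x := by
    filter_upwards [hK.ae_differentiableAt,
      ((lipschitzWith_ramp hc).comp hK).ae_differentiableAt] with x hux hvx
    by_cases hxB : x ∈ B
    · have hle : ‖fderiv ℝ (ramp c ∘ u) x‖ ≤ c⁻¹ * ‖fderiv ℝ u x‖ := by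
        simpa [Real.coe_toNNReal _ (inv_nonneg.2 hc.le)] using
          (lipschitzWith_ramp hc).norm_fderiv_comp_le hux hvx
      have hd := Real.rpow_nonneg (distC_nonneg Ω x) β
      simp only [indicator_of_mem hxB, hG]
      rw [← ENNReal.ofReal_mul (by positivity)]
      refine ENNReal.ofReal_le_ofReal ?_
      calc ‖fderiv ℝ (ramp c ∘ u) x‖ ^ p * distC Ω x ^ β
          ≤ (c⁻¹ * ‖fderiv ℝ u x‖) ^ p * distC Ω x ^ β := by gcongr
        _ = c⁻¹ ^ p * (‖fderiv ℝ u x‖ ^ p * distC Ω x ^ β) := by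
          rw [Real.mul_rpow (inv_nonneg.2 hc.le) (norm_nonneg _), mul_assoc]
    · have hout : |u x| ≤ c ∨ 2 * c ≤ |u x| := by
        simp only [B, mem_preimage, mem_Ioo, not_and_or, not_lt] at hxB
        exact hxB
      rw [indicator_of_notMem hxB, fderiv_ramp_comp_eq_zero hc hout, norm_zero,
        Real.zero_rpow hp.ne', zero_mul, ENNReal.ofReal_zero]
  calc energy p β Ω (ramp c ∘ u) ≤ ∫⁻ x in Ω, B.indicator G x :=
        lintegral_mono_ae (ae_restrict_of_ae hpt)
    _ ≤ ∫⁻ x, B.indicator G x := setLIntegral_le_lintegral _ _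
    _ = ∫⁻ x in B, G x := lintegral_indicator hB _
    _ = _ := lintegral_const_mul' _ _ ENNReal.ofReal_ne_top

theorem wcap_abs_preimage_Ici_le (hu : Admissible Ω u) {p β : ℝ} (hp : 0 < p) (hc : 0 < c) :
    wcap p β ((|u ·|) ⁻¹' Ici (2 * c)) Ω ≤ ENNReal.ofReal (c⁻¹ ^ p) *
      ∫⁻ x in (|u ·|) ⁻¹' Ioo c (2 * c),
        ENNReal.ofReal (‖fderiv ℝ u x‖ ^ p * distC Ω x ^ β) :=
  (iInf₂_le (ramp c ∘ u) ⟨hu.ramp_comp hc, fun _ hx => (ramp_eq_one hc hx).ge⟩).trans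
    (energy_ramp_comp_le hu hp hc)

end Ramp

section CapacitaryEstimate

variable {n : ℕ} {Ω : Set (EuclideanSpace ℝ (Fin n))} {p q β : ℝ} {C : ℝ≥0∞}
  {w : EuclideanSpace ℝ (Fin n) → ℝ≥0∞} {u : EuclideanSpace ℝ (Fin n) → ℝ}

theorem setLIntegral_shell_le (hΩ : IsOpen Ω) (hΩc : Ωᶜ.Nonempty) (hp : 0 < p) (hq : 0 ≤ q)
    (hw : ∀ E, CptIn E Ω → ∫⁻ x in E, w x ≤ C * wcap p β E Ω ^ (q / p))
    (hu : Admissible Ω u) {c : ℝ} (hc : 0 < c) :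
    ∫⁻ x in (|u ·|) ⁻¹' Ico (2 * c) (4 * c), ENNReal.ofReal (|u x| ^ q) * w x ≤
      C * 4 ^ q * (∫⁻ x in (|u ·|) ⁻¹' Ioo c (2 * c),
        ENNReal.ofReal (‖fderiv ℝ u x‖ ^ p * distC Ω x ^ β)) ^ (q / p) := by
  set E := (|u ·|) ⁻¹' Ici (2 * c)
  set a := ∫⁻ x in (|u ·|) ⁻¹' Ioo c (2 * c), ENNReal.ofReal (‖fderiv ℝ u x‖ ^ p * distC Ω x ^ β)
  have hEsupp : E ⊆ tsupport u := fun x hx =>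
    subset_closure (abs_pos.1 ((mul_pos two_pos hc).trans_le hx))
  have hwE : ∫⁻ x in E, w x ≤ C * wcap p β E Ω ^ (q / p) := by
    rcases E.eq_empty_or_nonempty with hE | hE
    · simp [hE]
    · exact hw E (cptIn_of_subset_isCompact hΩ hΩc hu.2.1 hu.2.2 hEsupp hE)
  have hshell : MeasurableSet ((|u ·|) ⁻¹' Ico (2 * c) (4 * c)) :=
    hu.continuous.abs.measurable measurableSet_Ico
  have hconst : ENNReal.ofReal ((4 * c) ^ q) * ENNReal.ofReal (c⁻¹ ^ p) ^ (q / p) = 4 ^ q := by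
    rw [ENNReal.ofReal_rpow_of_nonneg (by positivity) (by positivity), ← ENNReal.ofReal_mul
      (by positivity), ← Real.rpow_mul (by positivity), mul_div_cancel₀ _ hp.ne',
      ← Real.mul_rpow (by positivity) (by positivity), mul_inv_cancel_right₀ hc.ne',
      ← ENNReal.ofReal_rpow_of_nonneg zero_le_four hq, ENNReal.ofReal_ofNat]
  calc ∫⁻ x in (|u ·|) ⁻¹' Ico (2 * c) (4 * c), ENNReal.ofReal (|u x| ^ q) * w x
      ≤ ∫⁻ x in (|u ·|) ⁻¹' Ico (2 * c) (4 * c), ENNReal.ofReal ((4 * c) ^ q) * w x :=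
        setLIntegral_mono' hshell fun x hx => by gcongr; exact hx.2.le
    _ = ENNReal.ofReal ((4 * c) ^ q) * ∫⁻ x in (|u ·|) ⁻¹' Ico (2 * c) (4 * c), w x :=
        lintegral_const_mul' _ _ ENNReal.ofReal_ne_top
    _ ≤ ENNReal.ofReal ((4 * c) ^ q) * (C * wcap p β E Ω ^ (q / p)) := by
        gcongr
        exact (lintegral_mono_set fun x hx => hx.1).trans hwE
    _ ≤ ENNReal.ofReal ((4 * c) ^ q) * (C * (ENNReal.ofReal (c⁻¹ ^ p) * a) ^ (q / p)) := by
        gcongr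
        exact wcap_abs_preimage_Ici_le hu hp hc
    _ = C * 4 ^ q * a ^ (q / p) := by
        rw [ENNReal.mul_rpow_of_nonneg _ _ (by positivity), ← hconst]
        ring

theorem lintegral_rpow_abs_mul_le (hΩ : IsOpen Ω) (hΩc : Ωᶜ.Nonempty) (hp : 0 < p) (hpq : p ≤ q)
    (hw : ∀ E, CptIn E Ω → ∫⁻ x in E, w x ≤ C * wcap p β E Ω ^ (q / p))
    (hu : Admissible Ω u) :
    ∫⁻ x in Ω, ENNReal.ofReal (|u x| ^ q) * w x ≤ C * 4 ^ q * energy p β Ω u ^ (q / p) := by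
  have hq : 0 < q := hp.trans_le hpq
  have hf : Measurable (|u ·|) := hu.continuous.abs.measurable
  set a : ℤ → ℝ≥0∞ := fun j => ∫⁻ x in (|u ·|) ⁻¹' Ioo (2 ^ j) (2 * 2 ^ j),
    ENNReal.ofReal (‖fderiv ℝ u x‖ ^ p * distC Ω x ^ β)
  have hsupp : (Function.support fun x => ENNReal.ofReal (|u x| ^ q) * w x) ⊆
      (|u ·|) ⁻¹' Ioi 0 := fun x hx => by
    by_contra h
    simp only [mem_preimage, mem_Ioi, abs_pos, not_not] at h
    simp [h, Real.zero_rpow hq.ne'] at hx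
  have hbands : ∑' j, a j ≤ energy p β Ω u := by
    rw [← lintegral_iUnion (fun j => hf measurableSet_Ioo)
      fun i j hij => (pairwise_disjoint_Ioo_two_zpow hij).preimage _]
    refine lintegral_mono_set (iUnion_subset fun j x hx => hu.2.2 (subset_closure ?_))
    exact abs_pos.1 ((zpow_pos two_pos j).trans hx.1)
  calc ∫⁻ x in Ω, ENNReal.ofReal (|u x| ^ q) * w x
      ≤ ∫⁻ x, ENNReal.ofReal (|u x| ^ q) * w x := setLIntegral_le_lintegral _ _
    _ = ∫⁻ x in (|u ·|) ⁻¹' Ioi 0, ENNReal.ofReal (|u x| ^ q) * w x :=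
        (setLIntegral_eq_of_support_subset hsupp).symm
    _ = ∑' j : ℤ, ∫⁻ x in (|u ·|) ⁻¹' Ico (2 * 2 ^ j) (4 * 2 ^ j),
          ENNReal.ofReal (|u x| ^ q) * w x := by
        rw [Ioi_zero_eq_iUnion_Ico_two_mul_two_zpow, preimage_iUnion, lintegral_iUnion
          (fun j => hf measurableSet_Ico)
          fun i j hij => (pairwise_disjoint_Ico_two_mul_two_zpow hij).preimage _]
    _ ≤ ∑' j, C * 4 ^ q * a j ^ (q / p) := ENNReal.tsum_le_tsum fun j =>
        setLIntegral_shell_le hΩ hΩc hp hq.le hw hu (zpow_pos two_pos j)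
    _ = C * 4 ^ q * ∑' j, a j ^ (q / p) := ENNReal.tsum_mul_left
    _ ≤ C * 4 ^ q * (∑' j, a j) ^ (q / p) := by
        gcongr
        exact ENNReal.tsum_rpow_le_rpow_tsum a ((one_le_div hp).2 hpq)
    _ ≤ C * 4 ^ q * energy p β Ω u ^ (q / p) := by gcongr

end CapacitaryEstimate

theorem stmt2_general {n : ℕ} (p q β : ℝ) (hp : 1 ≤ p) (hpq : p ≤ q)
    (Ω : Set (EuclideanSpace ℝ (Fin n))) (hΩopen : IsOpen Ω)
    (hΩcne : Ωᶜ.Nonempty) (C₁ : ℝ) (hC₁ : 0 < C₁)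
    (hMaz : ∀ E : Set (EuclideanSpace ℝ (Fin n)), CptIn E Ω →
      (∫⁻ x in E, ENNReal.ofReal (distC Ω x ^ (q / p * ((n : ℝ) - p + β) - n))) ≤
        ENNReal.ofReal C₁ * (wcap p β E Ω) ^ (q / p)) :
    HardySobolev q p β Ω (4 * C₁ ^ (1 / q)) := by
  intro u hu
  have hp0 : 0 < p := zero_lt_one.trans_le hp
  have hq : 0 < q := hp0.trans_le hpq
  have hsplit : ∀ x (t : ℝ), ENNReal.ofReal (|u x| ^ q * t) =
      ENNReal.ofReal (|u x| ^ q) * ENNReal.ofReal t :=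
    fun x _ => ENNReal.ofReal_mul (by positivity)
  simp only [hsplit]
  calc _ ≤ (ENNReal.ofReal C₁ * 4 ^ q * energy p β Ω u ^ (q / p)) ^ (1 / q) :=
        ENNReal.rpow_le_rpow (lintegral_rpow_abs_mul_le hΩopen hΩcne hp0 hpq hMaz hu)
          (by positivity)
    _ = ENNReal.ofReal (4 * C₁ ^ (1 / q)) * energy p β Ω u ^ (1 / p) := by
        have hexp : q / p * (1 / q) = 1 / p := by field_simp
        rw [ENNReal.mul_rpow_of_nonneg _ _ (by positivity),
          ENNReal.mul_rpow_of_nonneg _ _ (by positivity), ← ENNReal.rpow_mul 4,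
          mul_one_div_cancel hq.ne', ENNReal.rpow_one, ← ENNReal.rpow_mul, hexp,
          ENNReal.ofReal_rpow_of_nonneg hC₁.le (by positivity),
          ENNReal.ofReal_mul zero_le_four, ENNReal.ofReal_ofNat, mul_comm _ (4 : ℝ≥0∞)]

/-- The Maz'ya-type capacity estimate implies the Hardy–Sobolev inequality with
constant `4 * C₁ ^ (1/q)`. -/
theorem stmt2 {n : ℕ} (hn : 0 < n) (p q β : ℝ) (hp : 1 ≤ p) (hpq : p ≤ q)
    (Ω : Set (EuclideanSpace ℝ (Fin n))) (hΩopen : IsOpen Ω) (hΩne : Ω.Nonempty)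
    (hΩcne : Ωᶜ.Nonempty) (C₁ : ℝ) (hC₁ : 0 < C₁)
    (hMaz : ∀ E : Set (EuclideanSpace ℝ (Fin n)), CptIn E Ω →
      (∫⁻ x in E, ENNReal.ofReal (distC Ω x ^ (q / p * ((n : ℝ) - p + β) - n))) ≤
        ENNReal.ofReal C₁ * (wcap p β E Ω) ^ (q / p)) :
    HardySobolev q p β Ω (4 * C₁ ^ (1 / q)) :=
  stmt2_general p q β hp hpq Ω hΩopen hΩcne C₁ hC₁ hMaz
end
end

section
/- Let n be a positive integer, 1 < p < ∞, and β > p − 1, and let Ω = B(0,1) be the open unit ball in ℝⁿ. Then cap_{p,β}(E,Ω) = 0 for every set E ⋐ Ω. -/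
open MeasureTheory Metric Set
open scoped ENNReal NNReal

noncomputable section

/-!
For `δ` below `dist(E, Ωᶜ)` the set `E` lies in `B(0, 1 - δ)`, so the capacity is bounded by
the energy of the radial cutoff that equals `1` on `B(0, 1 - δ)` and decreases
linearly to `0` on `1 - δ ≤ |x| ≤ 1 - δ/2`. Its gradient is at most `2/δ` and lives where
`d(x, Ωᶜ) ≤ δ`, on a shell of volume `O(δ)`, so its energy is `O(δ^(β - p + 1))`, which tends
to `0` because `β > p - 1`.
-/

open Filter Topology

section RadialCutoff

variable {E : Type*} [NormedAddCommGroup E] {r R : ℝ}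

def radialCutoff (r R : ℝ) (x : E) : ℝ :=
  max 0 (min 1 ((R - ‖x‖) / (R - r)))

theorem radialCutoff_eq_one (h : r < R) {x : E} (hx : ‖x‖ ≤ r) : radialCutoff r R x = 1 := by
  have : 1 ≤ (R - ‖x‖) / (R - r) := by rw [le_div_iff₀ (sub_pos.2 h)]; linarith
  simp [radialCutoff, min_eq_left this]

theorem radialCutoff_eq_zero (h : r ≤ R) {x : E} (hx : R ≤ ‖x‖) : radialCutoff r R x = 0 := by
  have : (R - ‖x‖) / (R - r) ≤ 0 := div_nonpos_of_nonpos_of_nonneg (by linarith) (by linarith)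
  exact max_eq_left ((min_le_right _ _).trans this)

theorem lipschitzWith_radialCutoff (h : r ≤ R) :
    LipschitzWith (R - r)⁻¹.toNNReal (radialCutoff r R : E → ℝ) := by
  have hlin : LipschitzWith (R - r)⁻¹.toNNReal fun x : E => (R - ‖x‖) / (R - r) := by
    refine LipschitzWith.of_dist_le_mul fun x y => ?_
    rw [Real.coe_toNNReal _ (inv_nonneg.2 (sub_nonneg.2 h)), Real.dist_eq, ← sub_div,
      abs_div, abs_of_nonneg (sub_nonneg.2 h), div_eq_inv_mul]
    gcongr
    rw [sub_sub_sub_cancel_left, abs_sub_comm]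
    exact dist_eq_norm x y ▸ abs_norm_sub_norm_le x y
  exact (hlin.const_min 1).const_max 0

theorem fderiv_radialCutoff_eq_zero [NormedSpace ℝ E] (h : r < R) {x : E} (hx : ‖x‖ < r) :
    fderiv ℝ (radialCutoff r R) x = 0 := by
  have : radialCutoff r R =ᶠ[𝓝 x] fun _ => (1 : ℝ) := by
    filter_upwards [isOpen_ball.mem_nhds (mem_ball_zero_iff.2 hx)] with y hy
    exact radialCutoff_eq_one h (mem_ball_zero_iff.1 hy).le
  rw [this.fderiv_eq, fderiv_const_apply]

theorem norm_fderiv_radialCutoff_le [NormedSpace ℝ E] (h : r ≤ R) (x : E) :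
    ‖fderiv ℝ (radialCutoff r R) x‖ ≤ (R - r)⁻¹ := by
  simpa [Real.coe_toNNReal _ (inv_nonneg.2 (sub_nonneg.2 h))] using
    norm_fderiv_le_of_lipschitz ℝ (lipschitzWith_radialCutoff (E := E) h) (x₀ := x)

theorem tsupport_radialCutoff_subset (h : r ≤ R) :
    tsupport (radialCutoff r R : E → ℝ) ⊆ closedBall 0 R := by
  refine closure_minimal (fun x hx => ?_) isClosed_closedBall
  by_contra hxR
  exact hx (radialCutoff_eq_zero h (not_le.1 (by simpa using hxR)).le)

end RadialCutoff

theorem infDist_compl_ball_zero_le {E : Type*} [NormedAddCommGroup E] [NormedSpace ℝ E]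
    {x : E} (hx : x ≠ 0) (R : ℝ) : infDist x (ball 0 R)ᶜ ≤ max (R - ‖x‖) 0 := by
  rcases le_or_gt R ‖x‖ with hRx | hxR
  · rw [infDist_zero_of_mem (by simpa using hRx)]
    exact le_max_right _ _
  have hx' : 0 < ‖x‖ := norm_pos_iff.2 hx
  refine (infDist_le_dist_of_mem (y := (R / ‖x‖) • x) ?_).trans (le_max_of_le_left ?_)
  · simp [norm_smul, abs_of_pos (hx'.trans hxR), hx'.ne']
  · rw [dist_eq_norm, show x - (R / ‖x‖) • x = (1 - R / ‖x‖) • x by rw [sub_smul, one_smul],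
      norm_smul, Real.norm_eq_abs, abs_of_nonpos (by rw [sub_nonpos, one_le_div hx']; exact hxR.le), neg_sub, sub_mul,
      div_mul_cancel₀ _ hx'.ne', one_mul]

theorem addHaar_ball_diff_ball_le {E : Type*} [NormedAddCommGroup E] [NormedSpace ℝ E]
    [MeasurableSpace E] [BorelSpace E] [FiniteDimensional ℝ E] (μ : Measure E)
    [μ.IsAddHaarMeasure] (x : E) {δ : ℝ} (hδ0 : 0 ≤ δ) (hδ1 : δ < 1) :
    μ (ball x 1 \ ball x (1 - δ)) ≤
      ENNReal.ofReal (Module.finrank ℝ E * δ) * μ (ball 0 1) := by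
  rw [measure_sdiff (ball_subset_ball (by linarith)) measurableSet_ball.nullMeasurableSet
      measure_ball_lt_top.ne, Measure.addHaar_ball_of_pos μ x one_pos,
    Measure.addHaar_ball_of_pos μ x (by linarith),
    ← ENNReal.sub_mul fun _ _ => measure_ball_lt_top.ne,
    ← ENNReal.ofReal_sub _ (by positivity)]
  gcongr
  have bernoulli := one_add_mul_le_pow (a := -δ) (by linarith) (Module.finrank ℝ E)
  rw [← sub_eq_add_neg] at bernoulli
  rw [one_pow]
  linarith

theorem sDist_le_infDist {n : ℕ} {E F : Set (EuclideanSpace ℝ (Fin n))} {x} (hx : x ∈ E) :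
    sDist E F ≤ infDist x F := by
  rcases F.eq_empty_or_nonempty with rfl | hF
  · simp [sDist]
  refine (le_infDist hF).2 fun y hy => csInf_le ⟨0, ?_⟩ (mem_image2_of_mem hx hy)
  rintro _ ⟨a, -, b, -, rfl⟩
  exact dist_nonneg

section Capacity

variable {n : ℕ}

theorem wcap_le_energy {p β : ℝ} {E Ω : Set (EuclideanSpace ℝ (Fin n))}
    {u : EuclideanSpace ℝ (Fin n) → ℝ} (hu : Admissible Ω u) (hE : ∀ x ∈ E, 1 ≤ u x) :
    wcap p β E Ω ≤ energy p β Ω u :=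
  iInf₂_le u ⟨hu, hE⟩

theorem admissible_radialCutoff {r R ρ : ℝ} (h : r ≤ R) (hR : R < ρ) :
    Admissible (ball (0 : EuclideanSpace ℝ (Fin n)) ρ) (radialCutoff r R) := by
  have hsupp := tsupport_radialCutoff_subset (E := EuclideanSpace ℝ (Fin n)) h
  exact ⟨⟨_, lipschitzWith_radialCutoff h⟩,
    (isCompact_closedBall 0 R).of_isClosed_subset (isClosed_tsupport _) hsupp,
    hsupp.trans (closedBall_subset_ball hR)⟩

theorem energy_le_of_fderiv_eq_zero {p β L D : ℝ} (hp : 0 < p) (hβ : 0 ≤ β)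
    {Ω K : Set (EuclideanSpace ℝ (Fin n))} (hΩ : MeasurableSet Ω) (hK : MeasurableSet K)
    {u : EuclideanSpace ℝ (Fin n) → ℝ} (hL : ∀ x, ‖fderiv ℝ u x‖ ≤ L)
    (hzero : ∀ x ∈ K, fderiv ℝ u x = 0) (hD : ∀ x ∈ Ω \ K, distC Ω x ≤ D) :
    energy p β Ω u ≤ ENNReal.ofReal (L ^ p * D ^ β) * volume (Ω \ K) := by
  calc energy p β Ω u
      ≤ ∫⁻ x in Ω, Kᶜ.indicator (fun _ => ENNReal.ofReal (L ^ p * D ^ β)) x := by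
        refine setLIntegral_mono' hΩ fun x hx => ?_
        by_cases hxK : x ∈ K
        · simp [hzero x hxK, Real.zero_rpow hp.ne']
        rw [indicator_of_mem hxK]
        have hL0 : 0 ≤ L := (norm_nonneg _).trans (hL x)
        have hD0 : 0 ≤ distC Ω x := infDist_nonneg
        gcongr
        exacts [hL x, hD x ⟨hx, hxK⟩]
    _ = ENNReal.ofReal (L ^ p * D ^ β) * volume (Ω \ K) := by
        rw [lintegral_indicator_const hK.compl, Measure.restrict_apply hK.compl, sdiff_eq,
          inter_comm]

theorem norm_le_of_lt_sDist_compl_ball {E : Set (EuclideanSpace ℝ (Fin n))} {x}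
    (hx : x ∈ E) {δ : ℝ} (hδ0 : 0 ≤ δ) (hδ1 : δ ≤ 1) (hδ : δ < sDist E (ball 0 1)ᶜ) :
    ‖x‖ ≤ 1 - δ := by
  rcases eq_or_ne x 0 with rfl | hx0
  · simpa using hδ1
  have := hδ.trans_le ((sDist_le_infDist hx).trans (infDist_compl_ball_zero_le hx0 1))
  rcases lt_max_iff.1 this with h | h <;> linarith

theorem energy_radialCutoff_le {p β δ : ℝ} (hp : 0 < p) (hβ : 0 ≤ β) (hδ0 : 0 < δ)
    (hδ1 : δ < 1) :
    energy p β (ball (0 : EuclideanSpace ℝ (Fin n)) 1) (radialCutoff (1 - δ) (1 - δ / 2)) ≤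
      ENNReal.ofReal (2 ^ p * n * δ ^ (β - p + 1)) *
        volume (ball (0 : EuclideanSpace ℝ (Fin n)) 1) := by
  have hslope : (1 - δ / 2 - (1 - δ))⁻¹ = 2 / δ := by
    rw [show 1 - δ / 2 - (1 - δ) = δ / 2 by ring, inv_div]
  have hdist : ∀ x ∈ ball (0 : EuclideanSpace ℝ (Fin n)) 1 \ ball 0 (1 - δ),
      distC (ball 0 1) x ≤ δ := by
    rintro x ⟨-, hx⟩
    have hx' : 1 - δ ≤ ‖x‖ := by simpa using hx
    refine (infDist_compl_ball_zero_le (norm_pos_iff.1 (by linarith)) 1).trans ?_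
    exact max_le (by linarith) hδ0.le
  calc energy p β (ball 0 1) (radialCutoff (1 - δ) (1 - δ / 2))
      ≤ ENNReal.ofReal ((2 / δ) ^ p * δ ^ β) *
          volume (ball (0 : EuclideanSpace ℝ (Fin n)) 1 \ ball 0 (1 - δ)) := by
        rw [← hslope]
        exact energy_le_of_fderiv_eq_zero hp hβ measurableSet_ball measurableSet_ball
          (norm_fderiv_radialCutoff_le (by linarith))
          (fun x hx => fderiv_radialCutoff_eq_zero (by linarith) (mem_ball_zero_iff.1 hx))
          hdist
    _ ≤ ENNReal.ofReal ((2 / δ) ^ p * δ ^ β) *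
          (ENNReal.ofReal (n * δ) * volume (ball (0 : EuclideanSpace ℝ (Fin n)) 1)) := by
        gcongr
        simpa using addHaar_ball_diff_ball_le volume (0 : EuclideanSpace ℝ (Fin n)) hδ0.le hδ1
    _ = ENNReal.ofReal (2 ^ p * n * δ ^ (β - p + 1)) *
          volume (ball (0 : EuclideanSpace ℝ (Fin n)) 1) := by
        rw [← mul_assoc, ← ENNReal.ofReal_mul (by positivity), Real.div_rpow zero_le_two hδ0.le,
          Real.rpow_add hδ0, Real.rpow_sub hδ0, Real.rpow_one]
        congr 2
        field_simp

end Capacity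

theorem tendsto_ofReal_mul_rpow_mul {C s : ℝ} (hs : 0 < s) {M : ℝ≥0∞} (hM : M ≠ ∞) :
    Tendsto (fun δ : ℝ => ENNReal.ofReal (C * δ ^ s) * M) (𝓝 0) (𝓝 0) := by
  have h : Tendsto (fun δ : ℝ => C * δ ^ s) (𝓝 0) (𝓝 0) := by
    simpa [Real.zero_rpow hs.ne'] using
      ((Real.continuousAt_rpow_const 0 s (Or.inr hs.le)).tendsto).const_mul C
  simpa using ENNReal.Tendsto.mul_const (ENNReal.tendsto_ofReal h) (Or.inr hM)

theorem stmt10_general {n : ℕ} (p β : ℝ) (hp : 1 < p) (hβ : p - 1 < β) :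
    ∀ E : Set (EuclideanSpace ℝ (Fin n)),
      CptIn E (Metric.ball (0 : EuclideanSpace ℝ (Fin n)) 1) →
        wcap p β E (Metric.ball (0 : EuclideanSpace ℝ (Fin n)) 1) = 0 := by
  intro E hE
  have hlim := (tendsto_ofReal_mul_rpow_mul (C := 2 ^ p * n) (by linarith : 0 < β - p + 1)
    (measure_ball_lt_top (μ := volume) (x := (0 : EuclideanSpace ℝ (Fin n))) (r := 1)).ne)
  refine le_zero_iff.1 (ge_of_tendsto (hlim.mono_left (nhdsWithin_le_nhds (s := Ioi 0))) ?_)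
  filter_upwards [Ioo_mem_nhdsGT (lt_min hE.2 one_pos)] with δ ⟨hδ0, hδ⟩
  have hδ1 : δ < 1 := hδ.trans_le (min_le_right _ _)
  calc wcap p β E (ball 0 1) ≤ energy p β (ball 0 1) (radialCutoff (1 - δ) (1 - δ / 2)) :=
        wcap_le_energy (admissible_radialCutoff (by linarith) (by linarith)) fun x hx =>
          (radialCutoff_eq_one (by linarith) (norm_le_of_lt_sDist_compl_ball hx hδ0.le hδ1.le
            (hδ.trans_le (min_le_left _ _)))).ge
    _ ≤ _ := energy_radialCutoff_le (by linarith) (by linarith) hδ0 hδ1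

/-- In the unit ball, for `β > p - 1` the weighted relative capacity of every
compactly contained set vanishes. -/
theorem stmt10 {n : ℕ} (hn : 0 < n) (p β : ℝ) (hp : 1 < p) (hβ : p - 1 < β) :
    ∀ E : Set (EuclideanSpace ℝ (Fin n)),
      CptIn E (Metric.ball (0 : EuclideanSpace ℝ (Fin n)) 1) →
        wcap p β E (Metric.ball (0 : EuclideanSpace ℝ (Fin n)) 1) = 0 :=
  stmt10_general p β hp hβ
end
end
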